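/- arXiv:1212.4717 — 3 statements merged into one kernel-verified Lean document; each statement's English description precedes it below -/
import Mathlib

section
/- For every t > 0 and every φ ≥ 0, ∫_ℝ j(t, φ, z)² γ(z) dz ≤ φ² e^{(2λ + α²)t} + 2φ e^{λt} · (λ/(λ + α²)) · (e^{(λ + α²)t} − 1) + e^{α² t}(e^{λt} − 1)². -/
/-!
Write `j = φ A(z) + ∫₀ᵗ f(u, z) du`. Both `A` and every `f(u, ·)` are exponentials of affine
functions of `z`, so after expanding the square and applying Tonelli (in `ℝ≥0∞`, where no
integrability has to be checked) every Gaussian integral is an instance of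
`∫ e^{cz} γ(z) dz = e^{c²/2}`. The `φ²` and cross terms come out exactly. The remaining term is
`∫∫_{[0,t]²} λ² e^{λ(u+v) + α²uv/t} du dv`, and `uv/t ≤ t` on the square bounds it by
`e^{α²t} (e^{λt} - 1)²`.
-/

open MeasureTheory Real

/-- Standard Gaussian density on ℝ. -/
noncomputable def gaussDensity (z : ℝ) : ℝ := Real.exp (-z ^ 2 / 2) / Real.sqrt (2 * Real.pi)

/-- One-step update of the conditional odds process upon observing a normalized
increment `z` after a waiting time `t`, starting from odds `φ`. -/
noncomputable def jfun (lam alp t φ z : ℝ) : ℝ :=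
  Real.exp (alp * z * Real.sqrt t + (lam - alp ^ 2 / 2) * t) * φ +
    ∫ u in (0:ℝ)..t, lam * Real.exp ((lam + alp * z / Real.sqrt t) * u - alp ^ 2 * u ^ 2 / (2 * t))

open ProbabilityTheory ENNReal

theorem lintegral_add_lintegral_sq {α β : Type*} [MeasurableSpace α] [MeasurableSpace β]
    {μ : Measure α} {ν : Measure β} [SFinite μ] [SFinite ν] {a : α → ℝ≥0∞}
    {f : β → α → ℝ≥0∞} (ha : Measurable a) (hf : Measurable (Function.uncurry f)) :
    ∫⁻ x, (a x + ∫⁻ u, f u x ∂ν) ^ 2 ∂μ =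
      ∫⁻ x, a x ^ 2 ∂μ + 2 * ∫⁻ u, ∫⁻ x, a x * f u x ∂μ ∂ν +
        ∫⁻ u, ∫⁻ v, ∫⁻ x, f u x * f v x ∂μ ∂ν ∂ν := by
  have hB : Measurable fun x ↦ ∫⁻ u, f u x ∂ν := hf.lintegral_prod_left'
  have hcross : ∫⁻ x, a x * ∫⁻ u, f u x ∂ν ∂μ = ∫⁻ u, ∫⁻ x, a x * f u x ∂μ ∂ν := by
    rw [← lintegral_lintegral_swap (by fun_prop)]
    exact lintegral_congr fun x ↦ (lintegral_const_mul _ hf.of_uncurry_right).symm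
  have hsquare : ∫⁻ x, (∫⁻ u, f u x ∂ν) * ∫⁻ v, f v x ∂ν ∂μ =
      ∫⁻ u, ∫⁻ v, ∫⁻ x, f u x * f v x ∂μ ∂ν ∂ν := by
    calc ∫⁻ x, (∫⁻ u, f u x ∂ν) * ∫⁻ v, f v x ∂ν ∂μ
        = ∫⁻ x, ∫⁻ u, ∫⁻ v, f u x * f v x ∂ν ∂ν ∂μ := lintegral_congr fun x ↦ by
          rw [← lintegral_mul_const _ hf.of_uncurry_right]
          exact lintegral_congr fun u ↦ (lintegral_const_mul _ hf.of_uncurry_right).symm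
      _ = ∫⁻ u, ∫⁻ x, ∫⁻ v, f u x * f v x ∂ν ∂μ ∂ν :=
          lintegral_lintegral_swap (Measurable.lintegral_prod_right'
            (f := fun p : (α × β) × β ↦ f p.1.2 p.1.1 * f p.2 p.1.1) (by fun_prop)).aemeasurable
      _ = ∫⁻ u, ∫⁻ v, ∫⁻ x, f u x * f v x ∂μ ∂ν ∂ν :=
          lintegral_congr fun u ↦ lintegral_lintegral_swap (by fun_prop)
  have hexpand : ∀ x, (a x + ∫⁻ u, f u x ∂ν) ^ 2 =
      a x ^ 2 + 2 * (a x * ∫⁻ u, f u x ∂ν) + (∫⁻ u, f u x ∂ν) * ∫⁻ v, f v x ∂ν := fun x ↦ by ring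
  have hBB : Measurable fun x ↦ (∫⁻ u, f u x ∂ν) * ∫⁻ v, f v x ∂ν := hB.mul hB
  have haB : Measurable fun x ↦ 2 * (a x * ∫⁻ u, f u x ∂ν) := (ha.mul hB).const_mul 2
  rw [lintegral_congr hexpand, lintegral_add_right _ hBB, lintegral_add_right _ haB,
    lintegral_const_mul' 2 _ ofNat_ne_top, hcross, hsquare]

theorem lintegral_ofReal_mul_exp_gaussianReal (μ : ℝ) (v : NNReal) (C c K : ℝ) :
    ∫⁻ z, ENNReal.ofReal (C * exp (c * z + K)) ∂gaussianReal μ v =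
      ENNReal.ofReal (C * exp (μ * c + v * c ^ 2 / 2 + K)) := by
  have hmgf : ∫ z, exp (c * z) ∂gaussianReal μ v = exp (μ * c + v * c ^ 2 / 2) :=
    congrFun mgf_fun_id_gaussianReal c
  have hintegrand : ∀ z, ENNReal.ofReal (C * exp (c * z + K)) =
      ENNReal.ofReal (C * exp K) * ENNReal.ofReal (exp (c * z)) := fun z ↦ by
    rw [← ENNReal.ofReal_mul' (exp_nonneg _), exp_add, mul_right_comm, mul_assoc]
  rw [lintegral_congr hintegrand, lintegral_const_mul' _ _ ofReal_ne_top,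
    ← ofReal_integral_eq_lintegral_ofReal (integrable_exp_mul_gaussianReal c) (ae_of_all _ fun _ ↦ exp_nonneg _), hmgf,
    ← ENNReal.ofReal_mul' (exp_nonneg _), exp_add _ K]
  congr 1
  ring

theorem lintegral_Ioc_ofReal_mul_exp_mul (C : ℝ) {c : ℝ} (hc : 0 < c) {t : ℝ} (ht : 0 ≤ t) :
    ∫⁻ u in Set.Ioc 0 t, ENNReal.ofReal (C * exp (c * u)) =
      ENNReal.ofReal (C * ((exp (c * t) - 1) / c)) := by
  have hexp : 0 ≤ (exp (c * t) - 1) / c :=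
    div_nonneg (sub_nonneg.2 (one_le_exp (mul_nonneg hc.le ht))) hc.le
  simp only [ENNReal.ofReal_mul' (exp_nonneg _)]
  rw [lintegral_const_mul' _ _ ofReal_ne_top, ENNReal.ofReal_mul' hexp,
    ← ofReal_integral_eq_lintegral_ofReal (by fun_prop : Continuous _).integrableOn_Ioc
      (ae_of_all _ fun _ ↦ exp_nonneg _), ← intervalIntegral.integral_of_le ht,
    intervalIntegral.integral_comp_mul_left _ hc.ne', integral_exp]
  simp [div_eq_inv_mul]

theorem gaussDensity_eq_gaussianPDFReal : gaussDensity = gaussianPDFReal 0 1 := by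
  ext z
  simp [gaussDensity, gaussianPDFReal, div_eq_inv_mul]

theorem ofReal_integral_mul_gaussDensity_le {F : ℝ → ℝ} (hF : ∀ z, 0 ≤ F z) :
    ENNReal.ofReal (∫ z, F z * gaussDensity z) ≤ ∫⁻ z, ENNReal.ofReal (F z) ∂gaussianReal 0 1 := by
  rw [gaussianReal_of_var_ne_zero _ one_ne_zero,
    lintegral_withDensity_eq_lintegral_mul_non_measurable _ (measurable_gaussianPDF 0 1)
      (ae_of_all _ fun _ ↦ gaussianPDF_lt_top)]
  refine (ofReal_le_enorm _).trans ((enorm_integral_le_lintegral_enorm _).trans_eq ?_)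
  refine lintegral_congr fun z ↦ ?_
  rw [gaussDensity_eq_gaussianPDFReal,
    enorm_of_nonneg (mul_nonneg (hF z) (gaussianPDFReal_nonneg _ _ _)), ENNReal.ofReal_mul (hF z),
    mul_comm]
  rfl

section jfun

variable (lam alp t : ℝ)

noncomputable def jfunFactor (z : ℝ) : ℝ :=
  exp (alp * z * Real.sqrt t + (lam - alp ^ 2 / 2) * t)

noncomputable def jfunIntegrand (u z : ℝ) : ℝ :=
  lam * exp ((lam + alp * z / Real.sqrt t) * u - alp ^ 2 * u ^ 2 / (2 * t))

theorem jfun_eq (φ z : ℝ) :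
    jfun lam alp t φ z =
      jfunFactor lam alp t z * φ + ∫ u in (0:ℝ)..t, jfunIntegrand lam alp t u z :=
  rfl

variable {t}

theorem ofReal_jfun_sq (hlam : 0 ≤ lam) (ht : 0 ≤ t) {φ : ℝ} (hφ : 0 ≤ φ) (z : ℝ) :
    ENNReal.ofReal (jfun lam alp t φ z ^ 2) =
      (ENNReal.ofReal (φ * jfunFactor lam alp t z) +
        ∫⁻ u in Set.Ioc 0 t, ENNReal.ofReal (jfunIntegrand lam alp t u z)) ^ 2 := by
  have hint : Continuous fun u ↦ jfunIntegrand lam alp t u z := by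
    unfold jfunIntegrand; fun_prop
  have hnonneg : ∀ u, 0 ≤ jfunIntegrand lam alp t u z := fun u ↦ by
    unfold jfunIntegrand; positivity
  have hfactor : 0 ≤ jfunFactor lam alp t z * φ := by
    unfold jfunFactor; positivity
  have hintegral : 0 ≤ ∫ u in Set.Ioc 0 t, jfunIntegrand lam alp t u z :=
    setIntegral_nonneg measurableSet_Ioc fun u _ ↦ hnonneg u
  rw [jfun_eq, intervalIntegral.integral_of_le ht, ← ofReal_integral_eq_lintegral_ofReal
      hint.integrableOn_Ioc (ae_of_all _ hnonneg), mul_comm φ,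
    ← ENNReal.ofReal_add hfactor hintegral, ← ENNReal.ofReal_pow (add_nonneg hfactor hintegral)]

theorem lintegral_ofReal_jfunFactor_sq (ht : 0 < t) {φ : ℝ} (hφ : 0 ≤ φ) :
    ∫⁻ z, ENNReal.ofReal (φ * jfunFactor lam alp t z) ^ 2 ∂gaussianReal 0 1 =
      ENNReal.ofReal (φ ^ 2 * exp ((2 * lam + alp ^ 2) * t)) := by
  -- With `t = s ^ 2` the square root disappears and the exponents are rational in `s`.
  obtain ⟨s, hs, rfl⟩ : ∃ s, 0 < s ∧ t = s ^ 2 := ⟨_, sqrt_pos.2 ht, (sq_sqrt ht.le).symm⟩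
  have hintegrand : ∀ z, ENNReal.ofReal (φ * jfunFactor lam alp (s ^ 2) z) ^ 2 =
      ENNReal.ofReal (φ ^ 2 * exp ((2 * alp * s) * z + (2 * lam - alp ^ 2) * s ^ 2)) := fun z ↦ by
    rw [← ENNReal.ofReal_pow (by unfold jfunFactor; positivity), jfunFactor, sqrt_sq hs.le,
      mul_pow, ← exp_nat_mul]
    congr 3
    push_cast
    ring
  rw [lintegral_congr hintegrand, lintegral_ofReal_mul_exp_gaussianReal, NNReal.coe_one]
  congr 3
  ring

theorem lintegral_ofReal_jfunFactor_mul_jfunIntegrand (ht : 0 < t) {φ : ℝ} (hφ : 0 ≤ φ) (u : ℝ) :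
    ∫⁻ z, ENNReal.ofReal (φ * jfunFactor lam alp t z) *
        ENNReal.ofReal (jfunIntegrand lam alp t u z) ∂gaussianReal 0 1 =
      ENNReal.ofReal (φ * lam * exp (lam * t) * exp ((lam + alp ^ 2) * u)) := by
  obtain ⟨s, hs, rfl⟩ : ∃ s, 0 < s ∧ t = s ^ 2 := ⟨_, sqrt_pos.2 ht, (sq_sqrt ht.le).symm⟩
  have hintegrand : ∀ z, ENNReal.ofReal (φ * jfunFactor lam alp (s ^ 2) z) *
        ENNReal.ofReal (jfunIntegrand lam alp (s ^ 2) u z) =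
      ENNReal.ofReal (φ * lam * exp ((alp * s + alp * u / s) * z +
        ((lam - alp ^ 2 / 2) * s ^ 2 + lam * u - alp ^ 2 * u ^ 2 / (2 * s ^ 2)))) := fun z ↦ by
    rw [← ENNReal.ofReal_mul (by unfold jfunFactor; positivity), jfunFactor, jfunIntegrand,
      sqrt_sq hs.le, mul_mul_mul_comm, ← exp_add]
    congr 3
    field_simp
    ring
  rw [lintegral_congr hintegrand, lintegral_ofReal_mul_exp_gaussianReal, NNReal.coe_one,
    mul_assoc _ (exp _), ← exp_add]
  congr 3
  field_simp
  ring

theorem lintegral_ofReal_jfunIntegrand_mul (hlam : 0 ≤ lam) (ht : 0 < t) (u v : ℝ) :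
    ∫⁻ z, ENNReal.ofReal (jfunIntegrand lam alp t u z) *
        ENNReal.ofReal (jfunIntegrand lam alp t v z) ∂gaussianReal 0 1 =
      ENNReal.ofReal (lam ^ 2 * exp (lam * (u + v) + alp ^ 2 * (u * v) / t)) := by
  obtain ⟨s, hs, rfl⟩ : ∃ s, 0 < s ∧ t = s ^ 2 := ⟨_, sqrt_pos.2 ht, (sq_sqrt ht.le).symm⟩
  have hintegrand : ∀ z, ENNReal.ofReal (jfunIntegrand lam alp (s ^ 2) u z) *
        ENNReal.ofReal (jfunIntegrand lam alp (s ^ 2) v z) =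
      ENNReal.ofReal (lam ^ 2 * exp ((alp * (u + v) / s) * z +
        (lam * (u + v) - alp ^ 2 * (u ^ 2 + v ^ 2) / (2 * s ^ 2)))) := fun z ↦ by
    rw [← ENNReal.ofReal_mul (by unfold jfunIntegrand; positivity), jfunIntegrand, jfunIntegrand,
      sqrt_sq hs.le, mul_mul_mul_comm, ← exp_add, sq lam]
    congr 3
    field_simp
    ring
  rw [lintegral_congr hintegrand, lintegral_ofReal_mul_exp_gaussianReal, NNReal.coe_one]
  congr 3
  field_simp
  ring

theorem lintegral_Ioc_Ioc_ofReal_sq_mul_exp_le (hlam : 0 < lam) (ht : 0 < t) :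
    ∫⁻ u in Set.Ioc 0 t, ∫⁻ v in Set.Ioc 0 t,
        ENNReal.ofReal (lam ^ 2 * exp (lam * (u + v) + alp ^ 2 * (u * v) / t)) ≤
      ENNReal.ofReal (exp (alp ^ 2 * t) * (exp (lam * t) - 1) ^ 2) := by
  have hpoint : ∀ u ∈ Set.Ioc 0 t, ∀ v ∈ Set.Ioc 0 t,
      lam ^ 2 * exp (lam * (u + v) + alp ^ 2 * (u * v) / t) ≤
        exp (alp ^ 2 * t) * ((lam * exp (lam * u)) * (lam * exp (lam * v))) := by
    intro u hu v hv
    have huv : alp ^ 2 * (u * v) / t ≤ alp ^ 2 * t := by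
      rw [mul_div_assoc]
      gcongr
      rw [div_le_iff₀ ht]
      nlinarith [hu.1, hu.2, hv.1, hv.2]
    calc lam ^ 2 * exp (lam * (u + v) + alp ^ 2 * (u * v) / t)
        ≤ lam ^ 2 * exp (lam * (u + v) + alp ^ 2 * t) := by
          gcongr
      _ = _ := by rw [exp_add, mul_add, exp_add]; ring
  calc ∫⁻ u in Set.Ioc 0 t, ∫⁻ v in Set.Ioc 0 t,
        ENNReal.ofReal (lam ^ 2 * exp (lam * (u + v) + alp ^ 2 * (u * v) / t))
      ≤ ∫⁻ u in Set.Ioc 0 t, ∫⁻ v in Set.Ioc 0 t, ENNReal.ofReal (exp (alp ^ 2 * t)) *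
          (ENNReal.ofReal (lam * exp (lam * u)) * ENNReal.ofReal (lam * exp (lam * v))) := by
        refine setLIntegral_mono' measurableSet_Ioc fun u hu ↦
          setLIntegral_mono' measurableSet_Ioc fun v hv ↦ ?_
        rw [← ENNReal.ofReal_mul (by positivity), ← ENNReal.ofReal_mul (by positivity)]
        exact ENNReal.ofReal_le_ofReal (hpoint u hu v hv)
    _ = ENNReal.ofReal (exp (alp ^ 2 * t)) *
          (∫⁻ u in Set.Ioc 0 t, ENNReal.ofReal (lam * exp (lam * u))) ^ 2 := by
        simp only [lintegral_const_mul' _ _ ofReal_ne_top]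
        rw [lintegral_mul_const _ (by fun_prop)]
        ring
    _ = ENNReal.ofReal (exp (alp ^ 2 * t) * (exp (lam * t) - 1) ^ 2) := by
        rw [lintegral_Ioc_ofReal_mul_exp_mul _ hlam ht.le, mul_div_cancel₀ _ hlam.ne',
          ← ENNReal.ofReal_pow (sub_nonneg.2 (one_le_exp (by positivity))),
          ← ENNReal.ofReal_mul (exp_nonneg _)]

theorem lintegral_ofReal_jfun_sq_le (hlam : 0 < lam) (ht : 0 < t) {φ : ℝ} (hφ : 0 ≤ φ) :
    ∫⁻ z, ENNReal.ofReal (jfun lam alp t φ z ^ 2) ∂gaussianReal 0 1 ≤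
      ENNReal.ofReal (φ ^ 2 * exp ((2 * lam + alp ^ 2) * t)) +
        ENNReal.ofReal (2 * φ * exp (lam * t) * (lam / (lam + alp ^ 2)) *
          (exp ((lam + alp ^ 2) * t) - 1)) +
        ENNReal.ofReal (exp (alp ^ 2 * t) * (exp (lam * t) - 1) ^ 2) := by
  have hσ : 0 < lam + alp ^ 2 := by positivity
  have hcross : 2 * ENNReal.ofReal (φ * lam * exp (lam * t) *
      ((exp ((lam + alp ^ 2) * t) - 1) / (lam + alp ^ 2))) =
      ENNReal.ofReal (2 * φ * exp (lam * t) * (lam / (lam + alp ^ 2)) *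
        (exp ((lam + alp ^ 2) * t) - 1)) := by
    rw [← ENNReal.ofReal_ofNat, ← ENNReal.ofReal_mul zero_le_two]
    congr 1
    field_simp
  rw [lintegral_congr (ofReal_jfun_sq lam alp hlam.le ht.le hφ),
    lintegral_add_lintegral_sq (by unfold jfunFactor; fun_prop)
      (by unfold Function.uncurry jfunIntegrand; fun_prop),
    lintegral_ofReal_jfunFactor_sq lam alp ht hφ]
  simp only [lintegral_ofReal_jfunFactor_mul_jfunIntegrand lam alp ht hφ,
    lintegral_ofReal_jfunIntegrand_mul lam alp hlam.le ht]
  rw [lintegral_Ioc_ofReal_mul_exp_mul _ hσ ht.le, hcross]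
  grw [lintegral_Ioc_Ioc_ofReal_sq_mul_exp_le lam alp hlam ht]

end jfun

theorem gaussian_second_moment_jfun_le_general (lam alp : ℝ) (hlam : 0 < lam)
    (t : ℝ) (ht : 0 < t) (φ : ℝ) (hφ : 0 ≤ φ) :
    ∫ z : ℝ, (jfun lam alp t φ z) ^ 2 * gaussDensity z ≤
      φ ^ 2 * Real.exp ((2 * lam + alp ^ 2) * t) +
        2 * φ * Real.exp (lam * t) * (lam / (lam + alp ^ 2)) *
          (Real.exp ((lam + alp ^ 2) * t) - 1) +
        Real.exp (alp ^ 2 * t) * (Real.exp (lam * t) - 1) ^ 2 := by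
  have hR₁ : 0 ≤ φ ^ 2 * exp ((2 * lam + alp ^ 2) * t) := by positivity
  have hR₂ : 0 ≤ 2 * φ * exp (lam * t) * (lam / (lam + alp ^ 2)) *
      (exp ((lam + alp ^ 2) * t) - 1) :=
    mul_nonneg (by positivity) (sub_nonneg.2 (one_le_exp (by positivity)))
  have hR₃ : 0 ≤ exp (alp ^ 2 * t) * (exp (lam * t) - 1) ^ 2 := by positivity
  rw [← ENNReal.ofReal_le_ofReal_iff (add_nonneg (add_nonneg hR₁ hR₂) hR₃),
    ENNReal.ofReal_add (add_nonneg hR₁ hR₂) hR₃, ENNReal.ofReal_add hR₁ hR₂]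
  exact (ofReal_integral_mul_gaussDensity_le fun z ↦ sq_nonneg _).trans
    (lintegral_ofReal_jfun_sq_le lam alp hlam ht hφ)

/-- Second-moment bound for the one-step odds update under the Gaussian density. -/
theorem gaussian_second_moment_jfun_le (lam alp : ℝ) (hlam : 0 < lam) (halp : 0 < alp)
    (t : ℝ) (ht : 0 < t) (φ : ℝ) (hφ : 0 ≤ φ) :
    ∫ z : ℝ, (jfun lam alp t φ z) ^ 2 * gaussDensity z ≤
      φ ^ 2 * Real.exp ((2 * lam + alp ^ 2) * t) +
        2 * φ * Real.exp (lam * t) * (lam / (lam + alp ^ 2)) *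
          (Real.exp ((lam + alp ^ 2) * t) - 1) +
        Real.exp (alp ^ 2 * t) * (Real.exp (lam * t) - 1) ^ 2 :=
  gaussian_second_moment_jfun_le_general lam alp hlam t ht φ hφ
end

section
/- Let w : [0, ∞) → ℝ be concave and nondecreasing with −1/c ≤ w(x) ≤ 0 for all x ≥ 0. Then J₀w is concave and nondecreasing on [0, ∞). (This is the inductive step showing that each value function vₙ, defined by v₀ = J₀0 and vₙ = J₀vₙ₋₁, is concave and nondecreasing.) -/
/-! For a fixed waiting time `t`, `φ ↦ J w(t, φ)` is concave and nondecreasing on `[0, ∞)`: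
the running cost is affine in `φ` with slope `t`, and since `φ ↦ j(t, φ, z)` is affine and
increasing with nonnegative intercept, `K w(t, ·)` is a Gaussian average of concave
nondecreasing functions. As `w` is bounded, the family `t ↦ J w(t, φ)` is bounded below, so
its infimum `J₀ w` inherits both properties. -/

open MeasureTheory Real

/-- Deterministic evolution of the odds process between observations. -/
noncomputable def varphi (lam t x : ℝ) : ℝ := Real.exp (lam * t) * (x + 1) - 1

/-- The averaging operator `K`: Gaussian expectation of `w` applied to the
one-step odds update. -/
noncomputable def Kop (lam alp : ℝ) (w : ℝ → ℝ) (t φ : ℝ) : ℝ :=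
  ∫ z : ℝ, w (jfun lam alp t φ z) * gaussDensity z

/-- The jump operator `J`: running cost until the next observation at time `t`,
plus the discounted continuation value after that observation. -/
noncomputable def Jop (lam alp c : ℝ) (w : ℝ → ℝ) (t φ : ℝ) : ℝ :=
  (∫ u in (0:ℝ)..t, Real.exp (-(lam * u)) * (varphi lam u φ - lam / c)) +
    (if 0 < t then Real.exp (-(lam * t)) * Kop lam alp w t φ else 0)

/-- The optimized jump operator `J₀ w(φ) = inf_{t ≥ 0} J w(t, φ)`. -/
noncomputable def J0op (lam alp c : ℝ) (w : ℝ → ℝ) (φ : ℝ) : ℝ :=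
  ⨅ t : Set.Ici (0:ℝ), Jop lam alp c w t φ

open Set ProbabilityTheory

section InfimaAndIntegrals

variable {E : Type*} [AddCommGroup E] [Module ℝ E] {s : Set E}

theorem concaveOn_ciInf {ι : Sort*} [Nonempty ι] {f : ι → E → ℝ} (hf : ∀ i, ConcaveOn ℝ s (f i))
    (hbdd : ∀ x ∈ s, BddBelow (range fun i => f i x)) : ConcaveOn ℝ s fun x => ⨅ i, f i x := by
  refine ⟨(hf (Classical.arbitrary ι)).1, fun x hx y hy a b ha hb hab => le_ciInf fun i => ?_⟩
  calc a • (⨅ i, f i x) + b • ⨅ i, f i y ≤ a • f i x + b • f i y := by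
        gcongr
        exacts [ciInf_le (hbdd x hx) i, ciInf_le (hbdd y hy) i]
    _ ≤ f i (a • x + b • y) := (hf i).2 hx hy ha hb hab

theorem monotoneOn_ciInf {α β ι : Type*} [Preorder α] [ConditionallyCompleteLattice β]
    {s : Set α} {f : ι → α → β} (hf : ∀ i, MonotoneOn (f i) s)
    (hbdd : ∀ x ∈ s, BddBelow (range fun i => f i x)) : MonotoneOn (fun x => ⨅ i, f i x) s :=
  fun x hx _ hy hxy => ciInf_mono (hbdd x hx) fun i => hf i hx hy hxy

variable {Z : Type*} [MeasurableSpace Z] {μ : Measure Z} {F : E → Z → ℝ}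

theorem concaveOn_integral (hs : Convex ℝ s) (hF : ∀ z, ConcaveOn ℝ s fun x => F x z)
    (hint : ∀ x ∈ s, Integrable (F x) μ) : ConcaveOn ℝ s fun x => ∫ z, F x z ∂μ := by
  refine ⟨hs, fun x hx y hy a b ha hb hab => ?_⟩
  simp only [smul_eq_mul]
  rw [← integral_const_mul, ← integral_const_mul,
    ← integral_add ((hint x hx).const_mul a) ((hint y hy).const_mul b)]
  exact integral_mono (((hint x hx).const_mul a).add ((hint y hy).const_mul b))
    (hint _ (hs hx hy ha hb hab)) fun z => (hF z).2 hx hy ha hb hab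

theorem monotoneOn_integral {α : Type*} [Preorder α] {s : Set α} {F : α → Z → ℝ}
    (hF : ∀ z, MonotoneOn (F · z) s) (hint : ∀ x ∈ s, Integrable (F x) μ) : MonotoneOn (fun x => ∫ z, F x z ∂μ) s :=
  fun x hx y hy hxy => integral_mono (hint x hx) (hint y hy) fun z => hF z hx hy hxy

end InfimaAndIntegrals

section HalfLine

variable {w : ℝ → ℝ} {a b : ℝ}

theorem ConcaveOn.comp_mul_add_Ici (hw : ConcaveOn ℝ (Ici 0) w) (ha : 0 ≤ a) (hb : 0 ≤ b) :
    ConcaveOn ℝ (Ici 0) fun x => w (a * x + b) := by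
  refine ⟨convex_Ici 0, fun x (hx : 0 ≤ x) y (hy : 0 ≤ y) p q hp hq hpq => ?_⟩
  have key := hw.2 (x := a * x + b) (y := a * y + b) (by simp only [mem_Ici]; positivity)
    (by simp only [mem_Ici]; positivity) hp hq hpq
  convert key using 2
  simp only [smul_eq_mul]
  linear_combination b * hpq.symm

theorem MonotoneOn.comp_mul_add_Ici (hw : MonotoneOn w (Ici 0)) (ha : 0 ≤ a) (hb : 0 ≤ b) :
    MonotoneOn (fun x => w (a * x + b)) (Ici 0) := fun x (hx : 0 ≤ x) y (hy : 0 ≤ y) hxy =>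
  hw (show 0 ≤ a * x + b by positivity) (show 0 ≤ a * y + b by positivity) (by gcongr)

theorem MonotoneOn.measurable_comp_of_nonneg {α : Type*} [MeasurableSpace α] {g : α → ℝ}
    (hw : MonotoneOn w (Ici 0)) (hg : Measurable g) (hg0 : ∀ x, 0 ≤ g x) :
    Measurable fun x => w (g x) := by
  have hmono : Monotone fun y => w (max y 0) := fun y y' h =>
    hw (le_max_right y 0) (le_max_right y' 0) (max_le_max_right 0 h)
  convert hmono.measurable.comp hg using 2 with x
  simp only [Function.comp_apply, max_eq_left (hg0 x)]

end HalfLine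

section OddsUpdate

variable {lam alp t φ z : ℝ}

theorem jfun_eq_mul_add (lam alp t φ z : ℝ) :
    jfun lam alp t φ z =
      exp (alp * z * √t + (lam - alp ^ 2 / 2) * t) * φ + jfun lam alp t 0 z := by
  simp [jfun]

theorem jfun_zero_nonneg (hlam : 0 ≤ lam) (ht : 0 ≤ t) : 0 ≤ jfun lam alp t 0 z := by
  simp only [jfun, mul_zero, zero_add]
  exact intervalIntegral.integral_nonneg ht fun u _ => by positivity

theorem jfun_nonneg (hlam : 0 ≤ lam) (ht : 0 ≤ t) (hφ : 0 ≤ φ) : 0 ≤ jfun lam alp t φ z := by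
  rw [jfun_eq_mul_add]
  have := jfun_zero_nonneg (alp := alp) (z := z) hlam ht
  positivity

theorem continuous_jfun (lam alp t φ : ℝ) : Continuous (jfun lam alp t φ) := by
  unfold jfun
  fun_prop

end OddsUpdate

theorem Kop_eq_integral_gaussianReal (lam alp : ℝ) (w : ℝ → ℝ) (t φ : ℝ) :
    Kop lam alp w t φ = ∫ z, w (jfun lam alp t φ z) ∂gaussianReal 0 1 := by
  rw [integral_gaussianReal_eq_integral_smul one_ne_zero, Kop]
  congr with z
  simp [gaussDensity, gaussianPDFReal, div_eq_inv_mul, mul_comm]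

section Averaging

variable {lam alp t φ B : ℝ} {w : ℝ → ℝ}

theorem integrable_comp_jfun (hlam : 0 ≤ lam) (ht : 0 ≤ t) (hφ : 0 ≤ φ)
    (hmono : MonotoneOn w (Ici 0)) (hB : ∀ x, 0 ≤ x → |w x| ≤ B) :
    Integrable (fun z => w (jfun lam alp t φ z)) (gaussianReal 0 1) :=
  .of_bound (hmono.measurable_comp_of_nonneg (continuous_jfun lam alp t φ).measurable
      fun _ => jfun_nonneg hlam ht hφ).aestronglyMeasurable B
    (ae_of_all _ fun _ => hB _ (jfun_nonneg hlam ht hφ))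

theorem concaveOn_Kop (hlam : 0 ≤ lam) (ht : 0 ≤ t) (hconc : ConcaveOn ℝ (Ici 0) w)
    (hmono : MonotoneOn w (Ici 0)) (hB : ∀ x, 0 ≤ x → |w x| ≤ B) :
    ConcaveOn ℝ (Ici 0) (Kop lam alp w t) := by
  simp only [funext (Kop_eq_integral_gaussianReal lam alp w t)]
  refine concaveOn_integral (convex_Ici 0) (fun z => ?_)
    fun φ hφ => integrable_comp_jfun hlam ht hφ hmono hB
  exact (hconc.comp_mul_add_Ici (exp_pos _).le (jfun_zero_nonneg hlam ht)).congr
    fun φ _ => by rw [jfun_eq_mul_add lam alp t φ z]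

theorem monotoneOn_Kop (hlam : 0 ≤ lam) (ht : 0 ≤ t) (hmono : MonotoneOn w (Ici 0))
    (hB : ∀ x, 0 ≤ x → |w x| ≤ B) : MonotoneOn (Kop lam alp w t) (Ici 0) := by
  simp only [funext (Kop_eq_integral_gaussianReal lam alp w t)]
  refine monotoneOn_integral (fun z => ?_) fun φ hφ => integrable_comp_jfun hlam ht hφ hmono hB
  exact (hmono.comp_mul_add_Ici (exp_pos _).le (jfun_zero_nonneg hlam ht)).congr
    fun φ _ => by rw [jfun_eq_mul_add lam alp t φ z]

theorem abs_Kop_le (hlam : 0 ≤ lam) (ht : 0 ≤ t) (hφ : 0 ≤ φ) (hB : ∀ x, 0 ≤ x → |w x| ≤ B) :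
    |Kop lam alp w t φ| ≤ B := by
  rw [Kop_eq_integral_gaussianReal]
  simpa using norm_integral_le_of_norm_le_const (μ := gaussianReal 0 1)
    (f := fun z => w (jfun lam alp t φ z)) (ae_of_all _ fun z => hB _ (jfun_nonneg hlam ht hφ))

end Averaging

section Jump

variable {lam alp c t φ B : ℝ} {w : ℝ → ℝ}

theorem integral_exp_neg_mul (hlam : lam ≠ 0) (t : ℝ) :
    ∫ u in (0:ℝ)..t, exp (-(lam * u)) = (1 - exp (-(lam * t))) / lam := by
  rw [intervalIntegral.integral_comp_mul_left (fun x => exp (-x)) hlam,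
    intervalIntegral.integral_comp_neg (fun x => exp x), integral_exp, mul_zero, neg_zero,
    exp_zero, smul_eq_mul]
  field_simp

theorem integral_running_cost (hlam : lam ≠ 0) (c t φ : ℝ) :
    ∫ u in (0:ℝ)..t, exp (-(lam * u)) * (varphi lam u φ - lam / c) =
      t * φ + (t - (1 + lam / c) * ((1 - exp (-(lam * t))) / lam)) := by
  have hdisc (u : ℝ) : exp (-(lam * u)) * (varphi lam u φ - lam / c) =
      (φ + 1) - (1 + lam / c) * exp (-(lam * u)) := by
    have h : exp (-(lam * u)) * exp (lam * u) = 1 := by rw [← exp_add, neg_add_cancel, exp_zero]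
    rw [varphi]
    linear_combination (φ + 1) * h
  simp only [hdisc]
  rw [intervalIntegral.integral_sub intervalIntegrable_const
      (Continuous.intervalIntegrable (by fun_prop) _ _),
    intervalIntegral.integral_const, intervalIntegral.integral_const_mul,
    integral_exp_neg_mul hlam, smul_eq_mul]
  ring

theorem Jop_eq (hlam : lam ≠ 0) (alp c : ℝ) (w : ℝ → ℝ) (t : ℝ) :
    Jop lam alp c w t = fun φ => t * φ + (t - (1 + lam / c) * ((1 - exp (-(lam * t))) / lam)) +
      if 0 < t then exp (-(lam * t)) * Kop lam alp w t φ else 0 := by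
  ext φ
  rw [Jop, integral_running_cost hlam]

theorem concaveOn_Jop (hlam : 0 < lam) (ht : 0 ≤ t) (hconc : ConcaveOn ℝ (Ici 0) w)
    (hmono : MonotoneOn w (Ici 0)) (hB : ∀ x, 0 ≤ x → |w x| ≤ B) :
    ConcaveOn ℝ (Ici 0) (Jop lam alp c w t) := by
  rw [Jop_eq hlam.ne']
  refine ((LinearMap.mul ℝ ℝ t).concaveOn (convex_Ici 0) |>.add_const _).add ?_
  split_ifs
  · exact (concaveOn_Kop hlam.le ht hconc hmono hB).smul (exp_pos _).le
  · exact concaveOn_const 0 (convex_Ici 0)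

theorem monotoneOn_Jop (hlam : 0 < lam) (ht : 0 ≤ t) (hmono : MonotoneOn w (Ici 0))
    (hB : ∀ x, 0 ≤ x → |w x| ≤ B) : MonotoneOn (Jop lam alp c w t) (Ici 0) := by
  rw [Jop_eq hlam.ne']
  refine fun φ hφ ψ hψ hφψ => add_le_add (by gcongr) ?_
  split_ifs
  · exact mul_le_mul_of_nonneg_left (monotoneOn_Kop hlam.le ht hmono hB hφ hψ hφψ) (exp_pos _).le
  · rfl

theorem neg_le_Jop (hlam : 0 < lam) (ht : 0 ≤ t) (hφ : 0 ≤ φ) (hB : ∀ x, 0 ≤ x → |w x| ≤ B) :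
    -(|1 + lam / c| / lam + B) ≤ Jop lam alp c w t φ := by
  have hdecay : exp (-(lam * t)) ≤ 1 := exp_le_one_iff.2 (neg_nonpos.2 (mul_nonneg hlam.le ht))
  have hcost : (1 + lam / c) * ((1 - exp (-(lam * t))) / lam) ≤ |1 + lam / c| / lam :=
    calc (1 + lam / c) * ((1 - exp (-(lam * t))) / lam)
        ≤ |1 + lam / c| * ((1 - exp (-(lam * t))) / lam) :=
          mul_le_mul_of_nonneg_right (le_abs_self _) (div_nonneg (by linarith) hlam.le)
      _ ≤ |1 + lam / c| * (1 / lam) := by gcongr; linarith [exp_pos (-(lam * t))]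
      _ = |1 + lam / c| / lam := by ring
  have hjump : -B ≤ if 0 < t then exp (-(lam * t)) * Kop lam alp w t φ else 0 := by
    split_ifs
    · have hK := abs_Kop_le (alp := alp) hlam.le ht hφ hB
      rw [abs_le] at hK
      nlinarith [exp_pos (-(lam * t))]
    · linarith [(abs_nonneg _).trans (hB 0 le_rfl)]
  rw [Jop_eq hlam.ne']
  linarith [mul_nonneg ht hφ]

end Jump

theorem J0op_concave_monotone_general (lam alp c : ℝ) (hlam : 0 < lam)
    (w : ℝ → ℝ) (hconc : ConcaveOn ℝ (Set.Ici (0:ℝ)) w)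
    (hmono : MonotoneOn w (Set.Ici (0:ℝ)))
    (hwl : ∀ x : ℝ, 0 ≤ x → -1 / c ≤ w x) (hwu : ∀ x : ℝ, 0 ≤ x → w x ≤ 0) :
    ConcaveOn ℝ (Set.Ici (0:ℝ)) (J0op lam alp c w) ∧
      MonotoneOn (J0op lam alp c w) (Set.Ici (0:ℝ)) := by
  have hB (x : ℝ) (hx : 0 ≤ x) : |w x| ≤ 1 / c :=
    abs_le.2 ⟨by linarith [hwl x hx, neg_div c 1], by linarith [hwl x hx, hwu x hx, neg_div c 1]⟩
  have hbdd : ∀ φ ∈ Ici (0:ℝ), BddBelow (range fun t : Ici (0:ℝ) => Jop lam alp c w t φ) :=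
    fun φ hφ => ⟨_, forall_mem_range.2 fun t => neg_le_Jop hlam t.2 hφ hB⟩
  have : Nonempty (Ici (0:ℝ)) := ⟨⟨0, self_mem_Ici⟩⟩
  exact ⟨concaveOn_ciInf (fun t => concaveOn_Jop hlam t.2 hconc hmono hB) hbdd,
    monotoneOn_ciInf (fun t => monotoneOn_Jop hlam t.2 hmono hB) hbdd⟩

/-- If `w` is concave, nondecreasing, and valued in `[−1/c, 0]` on `[0, ∞)`, then
`J₀w` is concave and nondecreasing on `[0, ∞)`. -/
theorem J0op_concave_monotone (lam alp c : ℝ) (hlam : 0 < lam) (halp : 0 < alp) (hc : 0 < c)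
    (w : ℝ → ℝ) (hconc : ConcaveOn ℝ (Set.Ici (0:ℝ)) w)
    (hmono : MonotoneOn w (Set.Ici (0:ℝ)))
    (hwl : ∀ x : ℝ, 0 ≤ x → -1 / c ≤ w x) (hwu : ∀ x : ℝ, 0 ≤ x → w x ≤ 0) :
    ConcaveOn ℝ (Set.Ici (0:ℝ)) (J0op lam alp c w) ∧
      MonotoneOn (J0op lam alp c w) (Set.Ici (0:ℝ)) :=
  J0op_concave_monotone_general lam alp c hlam w hconc hmono hwl hwu
end

section
/- The chain (Φₖ)_{k ≥ 0} is a submartingale with respect to the filtration (Fₖ)_{k ≥ 0}: each Φₖ is integrable, Fₖ-measurable, and E[Φₖ | Fₖ₋₁] ≥ Φₖ₋₁ almost surely for every k ≥ 1. -/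
open MeasureTheory Real

/-- The discretely observed odds chain: `Φ₀ = φ` and `Φₖ = j(t, Φₖ₋₁, Zₖ)`. -/
noncomputable def oddsChain {Ω : Type*} (lam alp t φ : ℝ) (Z : ℕ → Ω → ℝ) : ℕ → Ω → ℝ
  | 0 => fun _ => φ
  | k + 1 => fun ω => jfun lam alp t (oddsChain lam alp t φ Z k ω) (Z (k + 1) ω)

/-- The filtration `Fₖ = σ(Z₁, …, Zₖ)` generated by the first `k` observations
(`F₀` is trivial). -/
def obsFiltration {Ω : Type*} (Z : ℕ → Ω → ℝ) (k : ℕ) : MeasurableSpace Ω :=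
  ⨆ i ∈ Set.Icc 1 k, MeasurableSpace.comap (Z i) inferInstance

/-!
One step of the chain is affine in the previous value: `Φₖ₊₁ = W(Zₖ₊₁) Φₖ + C(Zₖ₊₁)` with
`W(z) = exp (α √t z + (λ - α²/2) t)` and `C ≥ 0` the integral term of `j`. As `Zₖ₊₁` is
independent of `Fₖ` and `Φₖ ≥ 0` is `Fₖ`-measurable,
`E[Φₖ₊₁ | Fₖ] = E[W(Z)] Φₖ + E[C(Z) | Fₖ] ≥ e^{λt} Φₖ ≥ Φₖ`, where `E[W(Z)] = e^{λt}` is the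
Gaussian moment generating function `E[exp (sZ)] = exp (s²/2)` at `s = α √t`. The same
independence, with `C(z) ≤ t λ exp (λ t + |α| √t |z|)`, gives integrability by induction.
-/

open ProbabilityTheory

noncomputable def oddsFactor (lam alp t z : ℝ) : ℝ :=
  exp (alp * z * √t + (lam - alp ^ 2 / 2) * t)

noncomputable def oddsDrift (lam alp t z : ℝ) : ℝ :=
  ∫ u in (0:ℝ)..t, lam * exp ((lam + alp * z / √t) * u - alp ^ 2 * u ^ 2 / (2 * t))

section OneStep

variable {lam alp t : ℝ}

@[fun_prop]
theorem measurable_oddsFactor : Measurable (oddsFactor lam alp t) := by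
  unfold oddsFactor; fun_prop

theorem continuous_oddsDrift : Continuous (oddsDrift lam alp t) := by
  unfold oddsDrift
  exact intervalIntegral.continuous_parametric_intervalIntegral_of_continuous'
    (by fun_prop) _ _

@[fun_prop]
theorem measurable_oddsDrift : Measurable (oddsDrift lam alp t) :=
  continuous_oddsDrift.measurable

theorem oddsDrift_nonneg (hlam : 0 ≤ lam) (ht : 0 ≤ t) (z : ℝ) : 0 ≤ oddsDrift lam alp t z :=
  intervalIntegral.integral_nonneg ht fun _ _ ↦ by positivity

theorem oddsDrift_exponent_le (hlam : 0 ≤ lam) {u : ℝ} (hu : u ∈ Set.Icc 0 t) (z : ℝ) :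
    (lam + alp * z / √t) * u - alp ^ 2 * u ^ 2 / (2 * t) ≤ lam * t + |alp * √t| * |z| := by
  obtain ⟨hu0, hut⟩ := hu
  have ht : 0 ≤ t := hu0.trans hut
  have hu_sqrt : u / √t ≤ √t :=
    div_le_of_le_mul₀ (Real.sqrt_nonneg t) (Real.sqrt_nonneg t) (by rwa [Real.mul_self_sqrt ht])
  have hdrift : alp * z / √t * u ≤ |alp * √t| * |z| := calc
    alp * z / √t * u = alp * z * (u / √t) := by ring
    _ ≤ |alp * z| * √t :=
      mul_le_mul (le_abs_self _) hu_sqrt (by positivity) (abs_nonneg _)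
    _ = |alp * √t| * |z| := by
      rw [abs_mul, abs_mul, abs_of_nonneg (Real.sqrt_nonneg t)]; ring
  have hquad : 0 ≤ alp ^ 2 * u ^ 2 / (2 * t) := by positivity
  nlinarith [mul_le_mul_of_nonneg_left hut hlam]

theorem oddsDrift_le (hlam : 0 ≤ lam) (ht : 0 ≤ t) (z : ℝ) :
    oddsDrift lam alp t z ≤ t * (lam * exp (lam * t + |alp * √t| * |z|)) := by
  calc oddsDrift lam alp t z ≤ ∫ _ in (0:ℝ)..t, lam * exp (lam * t + |alp * √t| * |z|) :=
        intervalIntegral.integral_mono_on ht (Continuous.intervalIntegrable (by fun_prop) _ _)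
          intervalIntegrable_const fun u hu ↦ by
            gcongr; exact oddsDrift_exponent_le hlam hu z
    _ = _ := by rw [intervalIntegral.integral_const, smul_eq_mul, sub_zero]

end OneStep

section Gaussian

variable {Ω : Type*} [MeasurableSpace Ω] {μ : Measure Ω} {Y : Ω → ℝ} {lam alp t : ℝ}

theorem integrable_exp_mul_of_map_eq_gaussianReal {m : ℝ} {v : NNReal}
    (hY : μ.map Y = gaussianReal m v) (s : ℝ) :
    Integrable (fun ω ↦ exp (s * Y ω)) μ := by
  have : NeZero μ := ⟨by
    rintro rfl
    rw [Measure.map_zero] at hY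
    exact IsProbabilityMeasure.ne_zero _ hY.symm⟩
  exact mgf_pos_iff.mp (by rw [mgf_gaussianReal hY]; positivity)

theorem oddsFactor_eq_exp_mul (z : ℝ) :
    oddsFactor lam alp t z = exp (alp * √t * z) * exp ((lam - alp ^ 2 / 2) * t) := by
  rw [oddsFactor, ← exp_add]; ring_nf

theorem integrable_oddsFactor (hY : μ.map Y = gaussianReal 0 1) :
    Integrable (fun ω ↦ oddsFactor lam alp t (Y ω)) μ := by
  simp_rw [oddsFactor_eq_exp_mul]
  exact (integrable_exp_mul_of_map_eq_gaussianReal hY _).mul_const _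

theorem integral_oddsFactor (hY : μ.map Y = gaussianReal 0 1) (ht : 0 ≤ t) :
    ∫ ω, oddsFactor lam alp t (Y ω) ∂μ = exp (lam * t) := by
  have hmgf := mgf_gaussianReal hY (alp * √t)
  rw [mgf] at hmgf
  simp_rw [oddsFactor_eq_exp_mul, integral_mul_const, hmgf, ← exp_add, mul_pow, sq_sqrt ht,
    NNReal.coe_one]
  ring_nf

theorem integrable_oddsDrift (hY : μ.map Y = gaussianReal 0 1) (hlam : 0 ≤ lam) (ht : 0 ≤ t) :
    Integrable (fun ω ↦ oddsDrift lam alp t (Y ω)) μ := by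
  have hYm : AEMeasurable Y μ := aemeasurable_of_map_neZero (by rw [hY]; infer_instance)
  have hexp := integrable_exp_abs_mul_abs (integrable_exp_mul_of_map_eq_gaussianReal hY (alp * √t))
    (integrable_exp_mul_of_map_eq_gaussianReal hY (-(alp * √t)))
  refine Integrable.mono' ((hexp.const_mul (exp (lam * t))).const_mul (t * lam))
    (measurable_oddsDrift.comp_aemeasurable hYm).aestronglyMeasurable (ae_of_all _ fun ω ↦ ?_)
  rw [Real.norm_of_nonneg (oddsDrift_nonneg hlam ht _)]
  exact (oddsDrift_le hlam ht _).trans_eq (by rw [exp_add]; ring)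

end Gaussian

section CondExp

variable {Ω : Type*} {m mY m0 : MeasurableSpace Ω} {μ : Measure[m0] Ω} {X A B : Ω → ℝ}

theorem integrable_mul_of_indep (hind : Indep mY m μ) (hA : Measurable[mY] A)
    (hX : Measurable[m] X) (hAi : Integrable A μ) (hXi : Integrable X μ) :
    Integrable (A * X) μ :=
  IndepFun.integrable_mul
    (indep_of_indep_of_le_right (indep_of_indep_of_le_left hind hA.comap_le) hX.comap_le) hAi hXi

theorem le_condExp_mul_add_of_indep [IsFiniteMeasure μ] (hmY : mY ≤ m0) (hm : m ≤ m0)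
    (hind : Indep mY m μ) (hA : Measurable[mY] A) (hAi : Integrable A μ)
    (hA1 : 1 ≤ ∫ ω, A ω ∂μ) (hX : Measurable[m] X) (hX0 : 0 ≤ X) (hXi : Integrable X μ)
    (hB0 : 0 ≤ B) (hBi : Integrable B μ) :
    X ≤ᵐ[μ] μ[A * X + B | m] := by
  have hAXi := integrable_mul_of_indep hind hA hX hAi hXi
  filter_upwards [condExp_add hAXi hBi m,
    condExp_mul_of_stronglyMeasurable_right hX.stronglyMeasurable hAXi hAi,
    condExp_indep_eq hmY hm hA.stronglyMeasurable hind,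
    condExp_nonneg (m := m) (Filter.Eventually.of_forall hB0)] with ω hadd hmul hAmean hB
  rw [Pi.zero_apply] at hB
  rw [hadd, Pi.add_apply, hmul, Pi.mul_apply, hAmean]
  nlinarith [mul_le_mul_of_nonneg_right hA1 (hX0 ω)]

end CondExp

section Chain

variable {Ω : Type*} {Z : ℕ → Ω → ℝ} {lam alp t φ : ℝ}

theorem oddsChain_succ (k : ℕ) :
    oddsChain lam alp t φ Z (k + 1) =
      (fun ω ↦ oddsFactor lam alp t (Z (k + 1) ω)) * oddsChain lam alp t φ Z k +
        fun ω ↦ oddsDrift lam alp t (Z (k + 1) ω) :=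
  rfl

theorem oddsChain_nonneg (hlam : 0 ≤ lam) (ht : 0 ≤ t) (hφ : 0 ≤ φ) (k : ℕ) :
    0 ≤ oddsChain lam alp t φ Z k := by
  induction k with
  | zero => exact fun _ ↦ hφ
  | succ k ih =>
    rw [oddsChain_succ]
    exact add_nonneg (mul_nonneg (fun _ ↦ (exp_pos _).le) ih) fun _ ↦ oddsDrift_nonneg hlam ht _

theorem obsFiltration_mono : Monotone (obsFiltration Z) :=
  fun _ _ hkl ↦ biSup_mono fun _ hi ↦ ⟨hi.1, hi.2.trans hkl⟩

theorem measurable_obsFiltration_succ (k : ℕ) : Measurable[obsFiltration Z (k + 1)] (Z (k + 1)) :=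
  Measurable.of_comap_le <| le_biSup (fun i ↦ MeasurableSpace.comap (Z i) inferInstance)
    (⟨Nat.le_add_left 1 k, le_rfl⟩ : k + 1 ∈ Set.Icc 1 (k + 1))

theorem measurable_oddsChain (k : ℕ) :
    Measurable[obsFiltration Z k] (oddsChain lam alp t φ Z k) := by
  induction k with
  | zero => exact measurable_const
  | succ k ih =>
    have hZ := measurable_obsFiltration_succ (Z := Z) k
    rw [oddsChain_succ]
    exact ((measurable_oddsFactor.comp hZ).mul (ih.mono (obsFiltration_mono k.le_succ) le_rfl)).add
      (measurable_oddsDrift.comp hZ)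

variable [MeasurableSpace Ω] {μ : Measure Ω}

theorem obsFiltration_le (hZ : ∀ k, Measurable (Z k)) (k : ℕ) :
    obsFiltration Z k ≤ ‹MeasurableSpace Ω› :=
  iSup₂_le fun i _ ↦ (hZ i).comap_le

theorem indep_comap_obsFiltration (hZ : ∀ k, Measurable (Z k)) (hind : iIndepFun Z μ) (k : ℕ) :
    Indep (MeasurableSpace.comap (Z (k + 1)) inferInstance) (obsFiltration Z k) μ := by
  have hdisj : Disjoint ({k + 1} : Set ℕ) (Set.Icc 1 k) := by
    rw [Set.disjoint_singleton_left, Set.mem_Icc]; omega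
  simpa [obsFiltration] using indep_iSup_of_disjoint (fun i ↦ (hZ i).comap_le) hind.iIndep hdisj

theorem integrable_oddsChain [IsFiniteMeasure μ] (hZ : ∀ k, Measurable (Z k))
    (hdist : ∀ k, μ.map (Z (k + 1)) = gaussianReal 0 1) (hind : iIndepFun Z μ)
    (hlam : 0 ≤ lam) (ht : 0 ≤ t) (k : ℕ) :
    Integrable (oddsChain lam alp t φ Z k) μ := by
  induction k with
  | zero => exact integrable_const φ
  | succ k ih =>
    rw [oddsChain_succ]
    exact (integrable_mul_of_indep (indep_comap_obsFiltration hZ hind k)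
      (measurable_oddsFactor.comp (comap_measurable _)) (measurable_oddsChain k)
      (integrable_oddsFactor (hdist k)) ih).add (integrable_oddsDrift (hdist k) hlam ht)

theorem oddsChain_le_condExp_succ [IsFiniteMeasure μ] (hZ : ∀ k, Measurable (Z k))
    (hdist : ∀ k, μ.map (Z (k + 1)) = gaussianReal 0 1) (hind : iIndepFun Z μ)
    (hlam : 0 ≤ lam) (ht : 0 ≤ t) (hφ : 0 ≤ φ) (k : ℕ) :
    oddsChain lam alp t φ Z k ≤ᵐ[μ] μ[oddsChain lam alp t φ Z (k + 1) | obsFiltration Z k] := by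
  rw [oddsChain_succ]
  refine le_condExp_mul_add_of_indep (hZ (k + 1)).comap_le (obsFiltration_le hZ k)
    (indep_comap_obsFiltration hZ hind k) (measurable_oddsFactor.comp (comap_measurable _))
    (integrable_oddsFactor (hdist k)) ?_ (measurable_oddsChain k) (oddsChain_nonneg hlam ht hφ k)
    (integrable_oddsChain hZ hdist hind hlam ht k) (fun _ ↦ oddsDrift_nonneg hlam ht _)
    (integrable_oddsDrift (hdist k) hlam ht)
  rw [integral_oddsFactor (hdist k) ht]
  exact one_le_exp (mul_nonneg hlam ht)

end Chain

theorem oddsChain_submartingale_general (lam alp t : ℝ) (hlam : 0 < lam) (ht : 0 < t)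
    {Ω : Type*} [MeasurableSpace Ω] (μ : MeasureTheory.Measure Ω) [IsProbabilityMeasure μ]
    (Z : ℕ → Ω → ℝ) (hZmeas : ∀ k, Measurable (Z k))
    (hZdist : ∀ k, 1 ≤ k → μ.map (Z k) = ProbabilityTheory.gaussianReal 0 1)
    (hZindep : ProbabilityTheory.iIndepFun Z μ)
    (φ : ℝ) (hφ : 0 ≤ φ) :
    (∀ k : ℕ, Integrable (oddsChain lam alp t φ Z k) μ) ∧
    (∀ k : ℕ, Measurable[obsFiltration Z k] (oddsChain lam alp t φ Z k)) ∧
    (∀ k : ℕ, 1 ≤ k →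
        oddsChain lam alp t φ Z (k - 1) ≤ᵐ[μ]
          μ[oddsChain lam alp t φ Z k | obsFiltration Z (k - 1)]) := by
  have hdist : ∀ k, μ.map (Z (k + 1)) = gaussianReal 0 1 :=
    fun k ↦ hZdist (k + 1) (Nat.le_add_left 1 k)
  refine ⟨integrable_oddsChain hZmeas hdist hZindep hlam.le ht.le, measurable_oddsChain,
    fun k hk ↦ ?_⟩
  obtain ⟨j, rfl⟩ := Nat.exists_eq_add_of_le' hk
  rw [Nat.add_sub_cancel]
  exact oddsChain_le_condExp_succ hZmeas hdist hZindep hlam.le ht.le hφ j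

/-- The odds chain `(Φₖ)` is a submartingale with respect to `(Fₖ)`: each `Φₖ` is
integrable and `Fₖ`-measurable, and `E[Φₖ | Fₖ₋₁] ≥ Φₖ₋₁` almost surely for `k ≥ 1`. -/
theorem oddsChain_submartingale (lam alp t : ℝ) (hlam : 0 < lam) (halp : 0 < alp) (ht : 0 < t)
    {Ω : Type*} [MeasurableSpace Ω] (μ : MeasureTheory.Measure Ω) [IsProbabilityMeasure μ]
    (Z : ℕ → Ω → ℝ) (hZmeas : ∀ k, Measurable (Z k))
    (hZdist : ∀ k, 1 ≤ k → μ.map (Z k) = ProbabilityTheory.gaussianReal 0 1)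
    (hZindep : ProbabilityTheory.iIndepFun Z μ)
    (φ : ℝ) (hφ : 0 ≤ φ) :
    (∀ k : ℕ, Integrable (oddsChain lam alp t φ Z k) μ) ∧
    (∀ k : ℕ, Measurable[obsFiltration Z k] (oddsChain lam alp t φ Z k)) ∧
    (∀ k : ℕ, 1 ≤ k →
        oddsChain lam alp t φ Z (k - 1) ≤ᵐ[μ]
          μ[oddsChain lam alp t φ Z k | obsFiltration Z (k - 1)]) :=
  oddsChain_submartingale_general lam alp t hlam ht μ Z hZmeas hZdist hZindep φ hφ
end
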